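/- arXiv:1412.7101 — 4 statements merged into one kernel-verified Lean document; each statement's English description precedes it below -/
import Mathlib

section
/- For graphs G on n vertices and H on m vertices, S_G^⊥ ⊗ M_m + M_n ⊗ S_H^⊥ = S_{G⊠H}^⊥, where ⊥ denotes the orthogonal complement with respect to the trace inner product in M_n, M_m and M_{nm} respectively. -/
open Matrix Kronecker
open scoped ComplexOrder

noncomputable def opNorm {ι : Type*} [Fintype ι] [DecidableEq ι] (X : Matrix ι ι ℂ) : ℝ :=
  ‖Matrix.toEuclideanCLM (𝕜 := ℂ) X‖

noncomputable def opSys {ι : Type*} [DecidableEq ι] (G : Set (ι × ι)) : Submodule ℂ (Matrix ι ι ℂ) :=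
  Submodule.span ℂ { M | ∃ i j, ((i, j) ∈ G ∨ i = j) ∧ M = Matrix.single i j 1 }

noncomputable def perp {ι : Type*} [Fintype ι] (S : Set (Matrix ι ι ℂ)) : Submodule ℂ (Matrix ι ι ℂ) where
  carrier := { X | ∀ Y ∈ S, Matrix.trace (X * Yᴴ) = 0 }
  zero_mem' := by intro Y hY; simp
  add_mem' := by
    intro a b ha hb Y hY
    simp [Matrix.add_mul, ha Y hY, hb Y hY]
  smul_mem' := by
    intro c a ha Y hY
    simp [Matrix.smul_mul, ha Y hY]

noncomputable def qdist {ι : Type*} [Fintype ι] [DecidableEq ι]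
    (X : Matrix ι ι ℂ) (V : Set (Matrix ι ι ℂ)) : ℝ :=
  sInf { r : ℝ | ∃ K ∈ V, r = opNorm (X + K) }

def permU {n : ℕ} (π : Equiv.Perm (Fin n)) : Matrix (Fin n) (Fin n) ℂ :=
  Matrix.of fun i j => if i = π j then 1 else 0

def strongProd {n m : ℕ} (G : Set (Fin n × Fin n)) (H : Set (Fin m × Fin m)) :
    Set ((Fin n × Fin m) × (Fin n × Fin m)) :=
  { x | ((x.1.1, x.2.1) ∈ G ∧ x.1.2 = x.2.2) ∨ ((x.1.2, x.2.2) ∈ H ∧ x.1.1 = x.2.1) ∨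
      ((x.1.1, x.2.1) ∈ G ∧ (x.1.2, x.2.2) ∈ H) }

/-!
`S_G^⊥` consists of the matrices vanishing on the pattern `{(i, j) | (i, j) ∈ G ∨ i = j}`, and the
pattern of `G ⊠ H` is exactly the product of the patterns of `G` and `H`. So a matrix unit
`E_{(i,k),(j,l)}` lies in `S_{G⊠H}^⊥` iff `E_{i,j} ∈ S_G^⊥` or `E_{k,l} ∈ S_H^⊥`, and then it is
`E_{i,j} ⊗ E_{k,l}` with one factor in the corresponding complement. Both inclusions follow by
expanding in matrix units.
-/

section Pattern

variable {ι : Type*} [Fintype ι] [DecidableEq ι]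

lemma trace_mul_conjTranspose_single_one (X : Matrix ι ι ℂ) (i j : ι) :
    trace (X * (single i j 1)ᴴ) = X i j := by
  rw [conjTranspose_single, star_one, trace_mul_single, MulOpposite.op_one, one_smul]

lemma mem_perp_opSys_iff (G : Set (ι × ι)) (X : Matrix ι ι ℂ) :
    X ∈ perp (opSys G : Set (Matrix ι ι ℂ)) ↔ ∀ i j, ((i, j) ∈ G ∨ i = j) → X i j = 0 := by
  constructor
  · intro hX i j hij
    rw [← trace_mul_conjTranspose_single_one X i j]
    exact hX (single i j 1) (Submodule.subset_span ⟨i, j, hij, rfl⟩)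
  · intro h Y hY
    induction hY using Submodule.span_induction with
    | mem Y hY =>
      obtain ⟨i, j, hij, rfl⟩ := hY
      rw [trace_mul_conjTranspose_single_one]
      exact h i j hij
    | zero => simp
    | add A B _ _ hA hB => simp [conjTranspose_add, Matrix.mul_add, hA, hB]
    | smul c A _ hA => simp [conjTranspose_smul, hA]

lemma single_mem_perp_opSys {G : Set (ι × ι)} {i j : ι} (h : ¬((i, j) ∈ G ∨ i = j)) (c : ℂ) :
    single i j c ∈ perp (opSys G : Set (Matrix ι ι ℂ)) := by
  rw [mem_perp_opSys_iff]
  rintro a b hab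
  rw [single_apply_of_ne]
  rintro ⟨rfl, rfl⟩
  exact h hab

end Pattern

section StrongProduct

variable {n m : ℕ} {G : Set (Fin n × Fin n)} {H : Set (Fin m × Fin m)}

lemma strongProd_or_eq_iff (i j : Fin n) (k l : Fin m) :
    (((i, k), (j, l)) ∈ strongProd G H ∨ (i, k) = (j, l)) ↔
      ((i, j) ∈ G ∨ i = j) ∧ ((k, l) ∈ H ∨ k = l) := by
  simp only [strongProd, Set.mem_ofPred_eq, Prod.mk.injEq]
  tauto

lemma kronecker_mem_perp_strongProd_of_left {K : Matrix (Fin n) (Fin n) ℂ}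
    (hK : K ∈ perp (opSys G : Set (Matrix (Fin n) (Fin n) ℂ))) (Y : Matrix (Fin m) (Fin m) ℂ) :
    K ⊗ₖ Y ∈ perp (opSys (strongProd G H) : Set (Matrix (Fin n × Fin m) (Fin n × Fin m) ℂ)) := by
  rw [mem_perp_opSys_iff] at hK ⊢
  rintro ⟨i, k⟩ ⟨j, l⟩ hikjl
  simp [hK i j ((strongProd_or_eq_iff i j k l).1 hikjl).1]

lemma kronecker_mem_perp_strongProd_of_right (X : Matrix (Fin n) (Fin n) ℂ)
    {L : Matrix (Fin m) (Fin m) ℂ} (hL : L ∈ perp (opSys H : Set (Matrix (Fin m) (Fin m) ℂ))) :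
    X ⊗ₖ L ∈ perp (opSys (strongProd G H) : Set (Matrix (Fin n × Fin m) (Fin n × Fin m) ℂ)) := by
  rw [mem_perp_opSys_iff] at hL ⊢
  rintro ⟨i, k⟩ ⟨j, l⟩ hikjl
  simp [hL k l ((strongProd_or_eq_iff i j k l).1 hikjl).2]

end StrongProduct

theorem stmt9_general (n m : ℕ) (G : Set (Fin n × Fin n)) (H : Set (Fin m × Fin m)) :
    Submodule.span ℂ { M | ∃ K ∈ perp (opSys G : Set (Matrix (Fin n) (Fin n) ℂ)),
        ∃ Y : Matrix (Fin m) (Fin m) ℂ, M = K ⊗ₖ Y } ⊔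
      Submodule.span ℂ { M | ∃ X : Matrix (Fin n) (Fin n) ℂ,
        ∃ L ∈ perp (opSys H : Set (Matrix (Fin m) (Fin m) ℂ)), M = X ⊗ₖ L } =
      perp (opSys (strongProd G H) : Set (Matrix ((Fin n) × (Fin m)) ((Fin n) × (Fin m)) ℂ)) := by
  refine le_antisymm (sup_le ?_ ?_) fun Z hZ => ?_
  · rw [Submodule.span_le]
    rintro _ ⟨K, hK, Y, rfl⟩
    exact kronecker_mem_perp_strongProd_of_left hK Y
  · rw [Submodule.span_le]
    rintro _ ⟨X, L, hL, rfl⟩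
    exact kronecker_mem_perp_strongProd_of_right X hL
  rw [mem_perp_opSys_iff] at hZ
  rw [matrix_eq_sum_single Z]
  refine Submodule.sum_mem _ fun ⟨i, k⟩ _ => Submodule.sum_mem _ fun ⟨j, l⟩ _ => ?_
  by_cases hG : (i, j) ∈ G ∨ i = j
  · by_cases hH : (k, l) ∈ H ∨ k = l
    · simp [hZ _ _ ((strongProd_or_eq_iff i j k l).2 ⟨hG, hH⟩)]
    · refine Submodule.mem_sup_right (Submodule.subset_span
        ⟨single i j (Z (i, k) (j, l)), single k l 1, single_mem_perp_opSys hH 1, ?_⟩)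
      rw [single_kronecker_single, mul_one]
  · refine Submodule.mem_sup_left (Submodule.subset_span
      ⟨single i j 1, single_mem_perp_opSys hG 1, single k l (Z (i, k) (j, l)), ?_⟩)
    rw [single_kronecker_single, one_mul]

theorem stmt9 (n m : ℕ) (G : Set (Fin n × Fin n)) (H : Set (Fin m × Fin m))
    (hsymG : ∀ i j, (i, j) ∈ G → (j, i) ∈ G) (hirrG : ∀ i, (i, i) ∉ G)
    (hsymH : ∀ i j, (i, j) ∈ H → (j, i) ∈ H) (hirrH : ∀ i, (i, i) ∉ H) :
    Submodule.span ℂ { M | ∃ K ∈ perp (opSys G : Set (Matrix (Fin n) (Fin n) ℂ)),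
        ∃ Y : Matrix (Fin m) (Fin m) ℂ, M = K ⊗ₖ Y } ⊔
      Submodule.span ℂ { M | ∃ X : Matrix (Fin n) (Fin n) ℂ,
        ∃ L ∈ perp (opSys H : Set (Matrix (Fin m) (Fin m) ℂ)), M = X ⊗ₖ L } =
      perp (opSys (strongProd G H) : Set (Matrix ((Fin n) × (Fin m)) ((Fin n) × (Fin m)) ℂ)) :=
  stmt9_general n m G H
end

section
/- Let G be a graph on k vertices and K_{p,q} an induced complete bipartite subgraph of G with parts {1,...,p} and {p+1,...,p+q}. Let X ∈ M_k be the 0-1 matrix with x_{i,j} = 1 iff 1 ≤ i ≤ p and p+1 ≤ j ≤ p+q. Then dist(X, S_G^⊥) = ‖X‖ = √(pq) in the operator norm. -/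
open Matrix Kronecker
open scoped ComplexOrder

/-!
`X` is the rank-one matrix `1_A 1_Bᴴ`, so `‖X‖ = ‖1_A‖ ‖1_B‖ = √(pq)`. Every `K ⊥ S_G` vanishes on
`A × B ⊆ G`, so `X + K` still has the all-ones block on `A × B`; then `⟪1_A, (X + K) 1_B⟫ = pq` and
Cauchy–Schwarz give `‖X + K‖ ≥ √(pq)`, while `K = 0` attains the bound.
-/

open InnerProductSpace Finset

section

variable {ι : Type*} [Fintype ι] [DecidableEq ι]

def indicatorVec (s : Finset ι) : EuclideanSpace ℂ ι :=
  WithLp.toLp 2 fun i => if i ∈ s then 1 else 0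

lemma norm_indicatorVec (s : Finset ι) : ‖indicatorVec s‖ = √(#s : ℝ) := by
  rw [EuclideanSpace.norm_eq]
  congr 1
  simp [indicatorVec, apply_ite, sum_ite_mem]

lemma opNorm_vecMulVec (x y : EuclideanSpace ℂ ι) :
    opNorm (vecMulVec x (star y)) = ‖x‖ * ‖y‖ := by
  have h : Matrix.toEuclideanCLM (𝕜 := ℂ) (vecMulVec x (star y)) = rankOne ℂ x y := by
    rw [← symm_toEuclideanLin_rankOne]
    exact ContinuousLinearMap.coe_injective <| by
      rw [coe_toEuclideanCLM_eq_toEuclideanLin, LinearEquiv.apply_symm_apply]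
  rw [opNorm, h, norm_rankOne]

lemma inner_indicatorVec_toEuclideanCLM (M : Matrix ι ι ℂ) (s t : Finset ι) :
    inner ℂ (indicatorVec s) (Matrix.toEuclideanCLM (𝕜 := ℂ) M (indicatorVec t)) =
      ∑ i ∈ s, ∑ j ∈ t, M i j := by
  simp [indicatorVec, PiLp.inner_apply, Matrix.mulVec, dotProduct, sum_ite_mem]

lemma sqrt_card_mul_card_le_opNorm (M : Matrix ι ι ℂ) (s t : Finset ι)
    (hM : ∀ i ∈ s, ∀ j ∈ t, M i j = 1) : √((#s : ℝ) * #t) ≤ opNorm M := by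
  set T := Matrix.toEuclideanCLM (𝕜 := ℂ) M
  have hinner : inner ℂ (indicatorVec s) (T (indicatorVec t)) = #s * #t := by
    rw [inner_indicatorVec_toEuclideanCLM,
      sum_congr rfl fun i hi => sum_congr rfl (hM i hi)]
    simp
  have hcs : (#s : ℝ) * #t ≤ √((#s : ℝ) * #t) * ‖T‖ :=
    calc (#s : ℝ) * #t = ‖inner ℂ (indicatorVec s) (T (indicatorVec t))‖ := by
          rw [hinner, norm_mul, Complex.norm_natCast, Complex.norm_natCast]
      _ ≤ ‖indicatorVec s‖ * (‖T‖ * ‖indicatorVec t‖) :=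
          (norm_inner_le_norm _ _).trans (by gcongr; exact T.le_opNorm _)
      _ = √((#s : ℝ) * #t) * ‖T‖ := by
          rw [norm_indicatorVec, norm_indicatorVec, Real.sqrt_mul (Nat.cast_nonneg _)]; ring
  show _ ≤ ‖T‖
  nlinarith [Real.mul_self_sqrt (by positivity : (0 : ℝ) ≤ #s * #t),
    Real.sqrt_nonneg ((#s : ℝ) * #t), norm_nonneg T]

lemma apply_eq_zero_of_mem_perp_opSys {G : Set (ι × ι)} {K : Matrix ι ι ℂ}
    (hK : K ∈ perp (opSys G : Set (Matrix ι ι ℂ))) {i j : ι} (hij : (i, j) ∈ G) : K i j = 0 := by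
  have := hK _ (Submodule.subset_span ⟨i, j, Or.inl hij, rfl⟩)
  simpa [trace_mul_single] using this

lemma qdist_eq_opNorm_of_forall_le {X : Matrix ι ι ℂ} {V : Set (Matrix ι ι ℂ)} (h0 : 0 ∈ V)
    (h : ∀ K ∈ V, opNorm X ≤ opNorm (X + K)) : qdist X V = opNorm X := by
  have hX : opNorm X ∈ { r : ℝ | ∃ K ∈ V, r = opNorm (X + K) } := ⟨0, h0, by rw [add_zero]⟩
  refine le_antisymm (csInf_le ⟨opNorm X, ?_⟩ hX) (le_csInf ⟨_, hX⟩ ?_) <;>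
    rintro r ⟨K, hK, rfl⟩ <;> exact h K hK

end

lemma Fin.card_filter_le_val_lt_add {k p q : ℕ} (h : p + q ≤ k) :
    #{i : Fin k | p ≤ i.val ∧ i.val < p + q} = q := by
  have hsdiff : filter (fun i : Fin k => p ≤ i.val ∧ i.val < p + q) univ =
      filter (fun i : Fin k => i.val < p + q) univ \ filter (fun i : Fin k => i.val < p) univ := by
    ext i; simp only [mem_filter, mem_sdiff, mem_univ, true_and]; omega
  rw [hsdiff, card_sdiff_of_subset (monotone_filter_right _ fun i _ (hi : i.val < p) => by omega),
    Fin.card_filter_val_lt, Fin.card_filter_val_lt]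
  omega

theorem stmt11_general (k p q : ℕ) (hpq : p + q ≤ k) (G : Set (Fin k × Fin k))
    (hind : ∀ i j : Fin k, i.val < p + q → j.val < p + q →
      ((i, j) ∈ G ↔ ((i.val < p ∧ p ≤ j.val) ∨ (j.val < p ∧ p ≤ i.val)))) :
    qdist (Matrix.of fun i j : Fin k =>
        if i.val < p ∧ p ≤ j.val ∧ j.val < p + q then (1 : ℂ) else 0)
        (perp (opSys G : Set (Matrix (Fin k) (Fin k) ℂ))) =
      opNorm (Matrix.of fun i j : Fin k =>
        if i.val < p ∧ p ≤ j.val ∧ j.val < p + q then (1 : ℂ) else 0) ∧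
    opNorm (Matrix.of fun i j : Fin k =>
        if i.val < p ∧ p ≤ j.val ∧ j.val < p + q then (1 : ℂ) else 0) =
      Real.sqrt (p * q) := by
  set A : Finset (Fin k) := {i | i.val < p}
  set B : Finset (Fin k) := {j | p ≤ j.val ∧ j.val < p + q}
  have hA : #A = p := by rw [Fin.card_filter_val_lt, min_eq_right (by omega)]
  have hB : #B = q := Fin.card_filter_le_val_lt_add hpq
  have hX : (Matrix.of fun i j : Fin k =>
      if i.val < p ∧ p ≤ j.val ∧ j.val < p + q then (1 : ℂ) else 0) =
      vecMulVec (indicatorVec A) (star (indicatorVec B)) := by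
    ext i j
    simp only [A, B, indicatorVec, of_apply, vecMulVec_apply, Pi.star_apply, mem_filter, mem_univ,
      true_and]
    split_ifs <;> simp_all
  have hnorm : opNorm (vecMulVec (indicatorVec A) (star (indicatorVec B))) = √(p * q) := by
    rw [opNorm_vecMulVec, norm_indicatorVec, norm_indicatorVec, hA, hB,
      Real.sqrt_mul (Nat.cast_nonneg _)]
  rw [hX]
  refine ⟨qdist_eq_opNorm_of_forall_le (zero_mem _) fun K hK => ?_, hnorm⟩
  rw [hnorm, ← hA, ← hB]
  refine sqrt_card_mul_card_le_opNorm _ A B fun i hi j hj => ?_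
  have hij : (i, j) ∈ G := by
    simp only [A, B, mem_filter, mem_univ, true_and] at hi hj
    exact (hind i j (by omega) hj.2).mpr (Or.inl ⟨hi, hj.1⟩)
  simp [indicatorVec, vecMulVec_apply, hi, hj, apply_eq_zero_of_mem_perp_opSys hK hij]

theorem stmt11 (k p q : ℕ) (hpq : p + q ≤ k) (G : Set (Fin k × Fin k))
    (hsym : ∀ i j, (i, j) ∈ G → (j, i) ∈ G) (hirr : ∀ i, (i, i) ∉ G)
    (hind : ∀ i j : Fin k, i.val < p + q → j.val < p + q →
      ((i, j) ∈ G ↔ ((i.val < p ∧ p ≤ j.val) ∨ (j.val < p ∧ p ≤ i.val)))) :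
    qdist (Matrix.of fun i j : Fin k =>
        if i.val < p ∧ p ≤ j.val ∧ j.val < p + q then (1 : ℂ) else 0)
        (perp (opSys G : Set (Matrix (Fin k) (Fin k) ℂ))) =
      opNorm (Matrix.of fun i j : Fin k =>
        if i.val < p ∧ p ≤ j.val ∧ j.val < p + q then (1 : ℂ) else 0) ∧
    opNorm (Matrix.of fun i j : Fin k =>
        if i.val < p ∧ p ≤ j.val ∧ j.val < p + q then (1 : ℂ) else 0) =
      Real.sqrt (p * q) :=
  stmt11_general k p q hpq G hind
end

section
/- If A, B ∈ M_n(ℂ) are positive semidefinite and C, D ∈ M_m(ℂ) are positive semidefinite with block matrices [[A, X],[X*, B]] ⪰ 0 in M_{2n} and [[C, Y],[Y*, D]] ⪰ 0 in M_{2m}, then the block matrix [[A⊗C, X⊗Y],[(X⊗Y)*, B⊗D]] is positive semidefinite in M_{2nm}. -/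
open Matrix Kronecker
open scoped ComplexOrder

def Matrix.sumProdCorners {n₁ n₂ n₁' n₂' : Type*} :
    (n₁ × n₁') ⊕ (n₂ × n₂') → (n₁ ⊕ n₂) × (n₁' ⊕ n₂') :=
  Sum.elim (Prod.map Sum.inl Sum.inl) (Prod.map Sum.inr Sum.inr)

theorem Matrix.fromBlocks_kronecker_eq_submatrix {R : Type*} [Mul R]
    {n₁ n₂ m₁ m₂ n₁' n₂' m₁' m₂' : Type*}
    (A : Matrix n₁ m₁ R) (B : Matrix n₁ m₂ R) (C : Matrix n₂ m₁ R) (D : Matrix n₂ m₂ R)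
    (A' : Matrix n₁' m₁' R) (B' : Matrix n₁' m₂' R) (C' : Matrix n₂' m₁' R)
    (D' : Matrix n₂' m₂' R) :
    fromBlocks (A ⊗ₖ A') (B ⊗ₖ B') (C ⊗ₖ C') (D ⊗ₖ D') =
      (fromBlocks A B C D ⊗ₖ fromBlocks A' B' C' D').submatrix sumProdCorners sumProdCorners := by
  ext (⟨i, i'⟩ | ⟨i, i'⟩) (⟨j, j'⟩ | ⟨j, j'⟩) <;> rfl

theorem stmt17_general (n m : ℕ) (A B X : Matrix (Fin n) (Fin n) ℂ)
    (C D Y : Matrix (Fin m) (Fin m) ℂ)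
    (h1 : (Matrix.fromBlocks A X Xᴴ B).PosSemidef)
    (h2 : (Matrix.fromBlocks C Y Yᴴ D).PosSemidef) :
    (Matrix.fromBlocks (A ⊗ₖ C) (X ⊗ₖ Y) (X ⊗ₖ Y)ᴴ (B ⊗ₖ D)).PosSemidef := by
  rw [conjTranspose_kronecker, fromBlocks_kronecker_eq_submatrix]
  exact (h1.kronecker h2).submatrix _

theorem stmt17 (n m : ℕ) (A B X : Matrix (Fin n) (Fin n) ℂ)
    (C D Y : Matrix (Fin m) (Fin m) ℂ)
    (hA : A.PosSemidef) (hB : B.PosSemidef) (hC : C.PosSemidef) (hD : D.PosSemidef)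
    (h1 : (Matrix.fromBlocks A X Xᴴ B).PosSemidef)
    (h2 : (Matrix.fromBlocks C Y Yᴴ D).PosSemidef) :
    (Matrix.fromBlocks (A ⊗ₖ C) (X ⊗ₖ Y) (X ⊗ₖ Y)ᴴ (B ⊗ₖ D)).PosSemidef :=
  stmt17_general n m A B X C D Y h1 h2
end

section
/- If [[A, X],[X*, C]] is positive semidefinite in M_{2n}(ℂ) with A, C ∈ M_n(ℂ), then ‖X‖ ≤ max{‖A‖, ‖C‖} in the operator norm. -/
open Matrix Kronecker
open scoped ComplexOrder

/-!
Evaluating the quadratic form of the positive block matrix at `(-u, v)` gives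
`2 Re ⟪u, X v⟫ ≤ Re ⟪u, A u⟫ + Re ⟪v, C v⟫ ≤ m (‖u‖² + ‖v‖²)` with `m = max ‖A‖ ‖C‖`;
taking for `u` the vector `X v` rescaled to the length of `v` yields `‖X v‖ ≤ m ‖v‖`.
-/

open scoped InnerProductSpace

section InnerProductSpace

variable {𝕜 E F : Type*} [RCLike 𝕜] [NormedAddCommGroup E] [InnerProductSpace 𝕜 E]
  [NormedAddCommGroup F] [InnerProductSpace 𝕜 F]

theorem ContinuousLinearMap.re_inner_map_self_le (T : E →L[𝕜] E) (x : E) :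
    RCLike.re ⟪x, T x⟫_𝕜 ≤ ‖T‖ * ‖x‖ ^ 2 :=
  calc RCLike.re ⟪x, T x⟫_𝕜 ≤ ‖x‖ * ‖T x‖ := re_inner_le_norm _ _
    _ ≤ ‖x‖ * (‖T‖ * ‖x‖) := by gcongr; exact T.le_opNorm x
    _ = ‖T‖ * ‖x‖ ^ 2 := by ring

theorem ContinuousLinearMap.opNorm_le_of_two_mul_re_inner_le (T : E →L[𝕜] F) {M : ℝ}
    (hM : 0 ≤ M) (h : ∀ x y, 2 * RCLike.re ⟪x, T y⟫_𝕜 ≤ M * (‖x‖ ^ 2 + ‖y‖ ^ 2)) :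
    ‖T‖ ≤ M := by
  refine T.opNorm_le_bound hM fun y => ?_
  rcases eq_or_ne (T y) 0 with hTy | hTy
  · rw [hTy, norm_zero]; positivity
  have hy : 0 < ‖y‖ := norm_pos_iff.2 fun hy => hTy (by rw [hy, map_zero])
  have hTy' : 0 < ‖T y‖ := norm_pos_iff.2 hTy
  have key := h (((‖y‖ / ‖T y‖ : ℝ) : 𝕜) • T y) y
  rw [inner_smul_left, inner_self_eq_norm_sq_to_K, norm_smul, RCLike.conj_ofReal,
    RCLike.norm_ofReal, abs_of_nonneg (by positivity), div_mul_cancel₀ _ hTy'.ne',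
    ← RCLike.ofReal_pow, ← RCLike.ofReal_mul, RCLike.ofReal_re] at key
  have : ‖y‖ * ‖T y‖ ≤ ‖y‖ * (M * ‖y‖) := by
    field_simp at key
    nlinarith
  exact le_of_mul_le_mul_left this hy

end InnerProductSpace

theorem Matrix.PosSemidef.two_mul_re_dotProduct_mulVec_le {𝕜 m n : Type*} [RCLike 𝕜]
    [Fintype m] [Fintype n] {A : Matrix m m 𝕜} {X : Matrix m n 𝕜} {C : Matrix n n 𝕜}
    (h : (fromBlocks A X Xᴴ C).PosSemidef) (u : m → 𝕜) (v : n → 𝕜) :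
    2 * RCLike.re (star u ⬝ᵥ X *ᵥ v) ≤
      RCLike.re (star u ⬝ᵥ A *ᵥ u) + RCLike.re (star v ⬝ᵥ C *ᵥ v) := by
  have hnonneg := h.dotProduct_mulVec_nonneg (Sum.elim (-u) v)
  have hadj : star v ⬝ᵥ Xᴴ *ᵥ u = star (star u ⬝ᵥ X *ᵥ v) := by
    rw [star_dotProduct, star_mulVec, conjTranspose_conjTranspose, dotProduct_mulVec]
  simp only [Function.star_sumElim, fromBlocks_mulVec, sumElim_dotProduct_sumElim,
    Sum.elim_comp_inl, Sum.elim_comp_inr, star_neg, mulVec_neg, dotProduct_add, neg_dotProduct,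
    dotProduct_neg, hadj, neg_neg] at hnonneg
  have hre := (RCLike.nonneg_iff.1 hnonneg).1
  simp only [map_add, map_neg, RCLike.star_def, RCLike.conj_re] at hre
  linarith

theorem stmt18 (n : ℕ) (A C X : Matrix (Fin n) (Fin n) ℂ)
    (h : (Matrix.fromBlocks A X Xᴴ C).PosSemidef) :
    opNorm X ≤ max (opNorm A) (opNorm C) := by
  set T := toEuclideanCLM (n := Fin n) (𝕜 := ℂ)
  refine (T X).opNorm_le_of_two_mul_re_inner_le
    ((norm_nonneg _).trans (le_max_left _ (opNorm C))) fun x y => ?_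
  calc 2 * RCLike.re ⟪x, T X y⟫_ℂ ≤ RCLike.re ⟪x, T A x⟫_ℂ + RCLike.re ⟪y, T C y⟫_ℂ := by
        simpa only [EuclideanSpace.inner_eq_star_dotProduct, T, ofLp_toEuclideanCLM,
          dotProduct_comm _ (star _)] using h.two_mul_re_dotProduct_mulVec_le x.ofLp y.ofLp
    _ ≤ opNorm A * ‖x‖ ^ 2 + opNorm C * ‖y‖ ^ 2 :=
        add_le_add ((T A).re_inner_map_self_le x) ((T C).re_inner_map_self_le y)
    _ ≤ max (opNorm A) (opNorm C) * (‖x‖ ^ 2 + ‖y‖ ^ 2) := by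
        rw [mul_add]
        gcongr
        exacts [le_max_left _ _, le_max_right _ _]
end
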